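/- Let a ∈ 𝔻 and F ∈ ℂ with Re F ≥ c₁ > 0 and suppose |1 - a| ≥ δ > 0. Then |(1+a) + F(1-a)| ≥ δ·c₁. -/

import Mathlib

open Complex

theorem residue_lower_bound (a F : ℂ) (c₁ δ : ℝ)
    (ha : ‖a‖ < 1) (hc₁ : 0 < c₁) (hF : c₁ ≤ F.re)
    (hδ : 0 < δ) (hδa : δ ≤ ‖1 - a‖) :
    δ * c₁ ≤ ‖(1 + a) + F * (1 - a)‖ := by
  have hne : (1 - a) ≠ 0 := by
    intro h
    rw [h] at hδa
    simp at hδa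
    linarith
  set z : ℂ := (1 + a) / (1 - a) + F with hz
  have hfact : (1 + a) + F * (1 - a) = (1 - a) * z := by
    rw [hz, mul_add, mul_div_assoc', mul_div_cancel_left₀ _ hne]
    ring
  have hrez : c₁ ≤ z.re := by
    have hre : ((1 + a) / (1 - a)).re = (1 - ‖a‖ ^ 2) / ‖1 - a‖ ^ 2 := by
      rw [Complex.div_re]
      rw [Complex.normSq_eq_norm_sq]
      have h1 : (1 + a).re * (1 - a).re + (1 + a).im * (1 - a).im
          = 1 - ‖a‖ ^ 2 := by
        simp [Complex.sq_norm, Complex.normSq_apply]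
        ring
      rw [← add_div, h1]
    have hpos : 0 ≤ ((1 + a) / (1 - a)).re := by
      rw [hre]
      apply div_nonneg
      · nlinarith [norm_nonneg a]
      · positivity
    simp only [hz, Complex.add_re]
    linarith
  have habsz : c₁ ≤ ‖z‖ := le_trans hrez (Complex.re_le_norm z)
  rw [hfact, norm_mul]
  exact mul_le_mul hδa habsz hc₁.le (norm_nonneg _)
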